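/- arXiv:1211.6223 — 6 statements merged into one kernel-verified Lean document; each statement's English description precedes it below -/
import Mathlib

section
/- The improper integral over the real line of the complex rational function x ↦ (4 + 12ix − 20x² − 12ix³)/((x−i)⁶(x+i)⁴) equals −15π/16. -/
/-!
Partial fractions write the integrand as a combination of the terms `(x + c)⁻ᵏ` with `k ≥ 2` and
`Im c = ±1`, minus `(15/16) (1 + x²)⁻¹`. Each term `(x + c)⁻ᵏ` is integrable and has the primitive
`-(x + c)⁻⁽ᵏ⁻¹⁾ / (k - 1)`, which vanishes at `±∞`, so its integral is zero; the remaining term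
contributes `-(15/16) π`.
-/

open Complex MeasureTheory Filter Bornology Topology

namespace Complex

section SingleTerm

variable {c : ℂ}

theorem ofReal_add_ne_zero (hc : c.im ≠ 0) (x : ℝ) : (x : ℂ) + c ≠ 0 := by
  intro h
  exact hc (by simpa using congrArg im h)

/-- `‖x + c‖⁻²` is a multiple of the Cauchy density with location `-Re c` and scale `|Im c|`. -/
theorem integrable_inv_norm_ofReal_add_sq (hc : c.im ≠ 0) :
    Integrable fun x : ℝ => (‖(x : ℂ) + c‖ ^ 2)⁻¹ := by
  convert (ProbabilityTheory.integrable_cauchyPDFReal (-c.re) (γ := ‖c.im‖₊)).const_mul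
    (Real.pi / |c.im|) using 1
  funext x
  have : |c.im| ≠ 0 := abs_ne_zero.mpr hc
  simp only [Complex.sq_norm, normSq_apply, add_re, ofReal_re, add_im, ofReal_im, zero_add,
    ProbabilityTheory.cauchyPDFReal_def, coe_nnnorm, Real.norm_eq_abs, sub_neg_eq_add, sq_abs]
  field_simp

theorem integrable_inv_ofReal_add_pow (hc : c.im ≠ 0) {k : ℕ} (hk : 2 ≤ k) :
    Integrable fun x : ℝ => (((x : ℂ) + c) ^ k)⁻¹ := by
  obtain ⟨m, rfl⟩ := Nat.exists_eq_add_of_le' hk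
  refine ((integrable_inv_norm_ofReal_add_sq hc).const_mul (|c.im| ^ m)⁻¹).mono'
    (by fun_prop (disch := exact fun x => pow_ne_zero _ (ofReal_add_ne_zero hc x))) ?_
  refine ae_of_all _ fun x => ?_
  rw [norm_inv, norm_pow, pow_add, mul_inv]
  gcongr
  simpa using abs_im_le_norm ((x : ℂ) + c)

theorem tendsto_inv_ofReal_add_pow_cobounded {n : ℕ} (hn : n ≠ 0) :
    Tendsto (fun x : ℝ => (((x : ℂ) + c) ^ n)⁻¹) (cobounded ℝ) (𝓝 0) :=
  tendsto_inv₀_cobounded.comp <| (tendsto_pow_cobounded_cobounded hn).comp <|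
    (tendsto_add_const_cobounded c).comp (RCLike.tendsto_ofReal_cobounded_cobounded ℂ)

theorem hasDerivAt_inv_ofReal_add_pow (hc : c.im ≠ 0) (n : ℕ) (x : ℝ) :
    HasDerivAt (fun x : ℝ => (((x : ℂ) + c) ^ (n + 1))⁻¹)
      (-(n + 1) * (((x : ℂ) + c) ^ (n + 2))⁻¹) x := by
  have hx := ofReal_add_ne_zero hc x
  refine ((((hasDerivAt_id x).ofReal_comp.add_const c).pow (n + 1)).inv
    (pow_ne_zero _ hx)).congr_deriv ?_
  simp only [id, Pi.pow_apply]
  field_simp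
  push_cast
  ring

theorem integral_inv_ofReal_add_pow (hc : c.im ≠ 0) {k : ℕ} (hk : 2 ≤ k) :
    ∫ x : ℝ, (((x : ℂ) + c) ^ k)⁻¹ = 0 := by
  obtain ⟨n, rfl⟩ := Nat.exists_eq_add_of_le' hk
  have hprim := tendsto_inv_ofReal_add_pow_cobounded (c := c) n.succ_ne_zero
  have h := integral_of_hasDerivAt_of_tendsto (hasDerivAt_inv_ofReal_add_pow hc n)
    ((integrable_inv_ofReal_add_pow hc hk).const_mul _)
    (hprim.mono_left IsOrderBornology.atBot_le_cobounded)
    (hprim.mono_left IsOrderBornology.atTop_le_cobounded)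
  rw [integral_const_mul, sub_zero, mul_eq_zero] at h
  exact h.resolve_left (neg_ne_zero.mpr n.cast_add_one_ne_zero)

end SingleTerm

section FiniteSums

variable {ι : Type*} (s : Finset ι) (a c : ι → ℂ) (k : ι → ℕ)

theorem integrable_sum_mul_inv_ofReal_add_pow (hc : ∀ i ∈ s, (c i).im ≠ 0)
    (hk : ∀ i ∈ s, 2 ≤ k i) :
    Integrable fun x : ℝ => ∑ i ∈ s, a i * (((x : ℂ) + c i) ^ k i)⁻¹ :=
  integrable_finsetSum s fun i hi => (integrable_inv_ofReal_add_pow (hc i hi) (hk i hi)).const_mul _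

theorem integral_sum_mul_inv_ofReal_add_pow (hc : ∀ i ∈ s, (c i).im ≠ 0)
    (hk : ∀ i ∈ s, 2 ≤ k i) :
    ∫ x : ℝ, ∑ i ∈ s, a i * (((x : ℂ) + c i) ^ k i)⁻¹ = 0 := by
  rw [integral_finsetSum s fun i hi =>
    (integrable_inv_ofReal_add_pow (hc i hi) (hk i hi)).const_mul _]
  refine Finset.sum_eq_zero fun i hi => ?_
  rw [integral_const_mul, integral_inv_ofReal_add_pow (hc i hi) (hk i hi), mul_zero]

end FiniteSums

end Complex

theorem integrand_eq_partial_fractions (x : ℝ) :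
    ((4 + 12 * I * x - 20 * x ^ 2 - 12 * I * x ^ 3) / ((x - I) ^ 6 * (x + I) ^ 4) : ℂ) =
      ∑ i : Fin 5, ![1 / 4, I / 2, 11 / 16, 7 * I / 8, -3 / 4] i *
          (((x : ℂ) + ![-I, -I, I, I, I] i) ^ ![2, 5, 2, 3, 4] i)⁻¹
        - 15 / 16 * (((1 + x ^ 2)⁻¹ : ℝ) : ℂ) := by
  have h₁ : (x : ℂ) - I ≠ 0 := by
    simpa [sub_eq_add_neg] using ofReal_add_ne_zero (c := -I) (by simp) x
  have h₂ : (x : ℂ) + I ≠ 0 := ofReal_add_ne_zero (by simp) x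
  simp only [Fin.sum_univ_five, Fin.isValue, Matrix.cons_val_zero, Matrix.cons_val_one,
    Matrix.cons_val, ← sub_eq_add_neg, ofReal_inv, ofReal_add, ofReal_one, ofReal_pow]
  field_simp
  -- with the nonvanishing hypotheses in context, `grind` also reasons about the inverses and
  -- exhausts its ring steps
  clear h₁ h₂
  grind [I_sq]

theorem integral_case_a_II :
    ∫ x : ℝ, ((4 + 12 * I * x - 20 * x ^ 2 - 12 * I * x ^ 3) /
      ((x - I) ^ 6 * (x + I) ^ 4) : ℂ) = -((15 : ℂ) / 16) * (Real.pi : ℂ) := by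
  have hc : ∀ i ∈ Finset.univ, (![-I, -I, I, I, I] i).im ≠ 0 := by simp [Fin.forall_fin_succ]
  have hk : ∀ i ∈ Finset.univ, 2 ≤ ![2, 5, 2, 3, 4] i := by simp [Fin.forall_fin_succ]
  have hcauchy : Integrable fun x : ℝ => (15 / 16 : ℂ) * (((1 + x ^ 2)⁻¹ : ℝ) : ℂ) :=
    integrable_inv_one_add_sq.ofReal.const_mul _
  simp_rw [integrand_eq_partial_fractions]
  rw [integral_sub (integrable_sum_mul_inv_ofReal_add_pow _ _ _ _ hc hk) hcauchy,
    integral_sum_mul_inv_ofReal_add_pow _ _ _ _ hc hk, integral_const_mul,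
    integral_complex_ofReal, integral_univ_inv_one_add_sq]
  ring
end

section
/- The improper integral over the real line of the complex rational function x ↦ (−4i + 16x + 4ix²)/((x−i)⁵(x+i)⁴) equals 25π/16. -/
/-!
Multiplying numerator and denominator by `x + i` turns the integrand into
`(4 + 12 x² + i (4 x³ + 12 x)) / (1 + x²)⁵`. The imaginary part is odd and integrates to zero,
while the real part is `12 (1 + x²)⁻⁴ - 8 (1 + x²)⁻⁵`. Integrating the derivative of
`x (1 + x²)⁻⁽ⁿ⁺¹⁾` over `ℝ` gives the Wallis-type recurrence behind
`∫ (1 + x²)⁻⁽ⁿ⁺¹⁾ = π C(2n, n) / 4ⁿ`,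
so the integral is `12 · 5π/16 - 8 · 35π/128 = 25π/16`.
-/

open Complex MeasureTheory Filter Topology

theorem Function.Odd.integral_eq_zero {G E : Type*} [MeasurableSpace G] [NormedAddCommGroup E]
    [NormedSpace ℝ E] [AddGroup G] [MeasurableNeg G] {f : G → E} (hf : f.Odd) (μ : Measure G)
    [μ.IsNegInvariant] : ∫ x, f x ∂μ = 0 := by
  have h := integral_neg_eq_self f μ
  simp only [hf _, integral_neg] at h
  have h2 : (2 : ℝ) • ∫ x, f x ∂μ = 0 := by
    rw [two_smul]
    nth_rewrite 1 [← h]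
    exact neg_add_cancel _
  exact (smul_eq_zero.mp h2).resolve_left two_ne_zero

theorem integrable_inv_one_add_sq_pow (n : ℕ) :
    Integrable fun x : ℝ => ((1 + x ^ 2) ^ (n + 1))⁻¹ := by
  refine integrable_inv_one_add_sq.mono' (by fun_prop) (.of_forall fun x => ?_)
  have h1 : 1 ≤ 1 + x ^ 2 := le_add_of_nonneg_right (sq_nonneg x)
  rw [norm_inv, norm_pow, Real.norm_of_nonneg (zero_le_one.trans h1)]
  exact inv_anti₀ (by positivity) (le_self_pow₀ h1 n.succ_ne_zero)

theorem integrable_mul_inv_one_add_sq_pow (n : ℕ) :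
    Integrable fun x : ℝ => x * ((1 + x ^ 2) ^ (n + 2))⁻¹ := by
  refine integrable_inv_one_add_sq.mono' (by fun_prop) (.of_forall fun x => ?_)
  have h1 : 1 ≤ 1 + x ^ 2 := le_add_of_nonneg_right (sq_nonneg x)
  rw [norm_mul, norm_inv, norm_pow, Real.norm_eq_abs, Real.norm_of_nonneg (zero_le_one.trans h1),
    ← div_eq_mul_inv, div_le_iff₀ (by positivity), pow_succ' _ (n + 1), ← mul_assoc,
    inv_mul_cancel₀ (by positivity), one_mul]
  calc |x| ≤ 1 + x ^ 2 := by nlinarith [sq_abs x, sq_nonneg (|x| - 1)]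
    _ ≤ (1 + x ^ 2) ^ (n + 1) := le_self_pow₀ h1 n.succ_ne_zero

theorem tendsto_mul_inv_one_add_sq_pow_cocompact (n : ℕ) :
    Tendsto (fun x : ℝ => x * ((1 + x ^ 2) ^ (n + 1))⁻¹) (cocompact ℝ) (𝓝 0) := by
  refine squeeze_zero_norm' ?_ (tendsto_inv_atTop_zero.comp tendsto_norm_cocompact_atTop)
  filter_upwards [tendsto_norm_cocompact_atTop.eventually_gt_atTop 0] with x hx
  have h1 : 1 ≤ 1 + x ^ 2 := le_add_of_nonneg_right (sq_nonneg x)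
  show ‖x * _‖ ≤ ‖x‖⁻¹
  rw [norm_mul, norm_inv, norm_pow, Real.norm_of_nonneg (zero_le_one.trans h1),
    ← div_eq_mul_inv, div_le_iff₀ (by positivity)]
  calc ‖x‖ = ‖x‖⁻¹ * x ^ 2 := by
        rw [← sq_abs, ← Real.norm_eq_abs, sq, ← mul_assoc, inv_mul_cancel₀ hx.ne', one_mul]
    _ ≤ ‖x‖⁻¹ * (1 + x ^ 2) ^ (n + 1) := by
      gcongr
      exact (le_add_of_nonneg_left zero_le_one).trans (le_self_pow₀ h1 n.succ_ne_zero)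

theorem hasDerivAt_mul_inv_one_add_sq_pow (n : ℕ) (x : ℝ) :
    HasDerivAt (fun x : ℝ => x * ((1 + x ^ 2) ^ (n + 1))⁻¹)
      ((2 * n + 2) * ((1 + x ^ 2) ^ (n + 2))⁻¹ - (2 * n + 1) * ((1 + x ^ 2) ^ (n + 1))⁻¹)
      x := by
  have hsq : HasDerivAt (fun x : ℝ => 1 + x ^ 2) (2 * x) x := by
    simpa using (hasDerivAt_pow 2 x).const_add 1
  have hpow := (hsq.pow (n + 1)).inv (pow_ne_zero _ (by positivity))
  refine ((hasDerivAt_id' x).mul hpow).congr_deriv ?_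
  simp only [Pi.inv_apply, Pi.pow_apply]
  field_simp
  push_cast
  ring

theorem mul_integral_inv_one_add_sq_pow_succ_succ (n : ℕ) :
    (2 * n + 2 : ℝ) * ∫ x : ℝ, ((1 + x ^ 2) ^ (n + 2))⁻¹ =
      (2 * n + 1 : ℝ) * ∫ x : ℝ, ((1 + x ^ 2) ^ (n + 1))⁻¹ := by
  have hq := integrable_inv_one_add_sq_pow n
  have hq' := integrable_inv_one_add_sq_pow (n + 1)
  have h := integral_of_hasDerivAt_of_tendsto (hasDerivAt_mul_inv_one_add_sq_pow n)
    ((hq'.const_mul _).sub (hq.const_mul _))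
    ((tendsto_mul_inv_one_add_sq_pow_cocompact n).mono_left atBot_le_cocompact)
    ((tendsto_mul_inv_one_add_sq_pow_cocompact n).mono_left atTop_le_cocompact)
  rw [integral_sub (hq'.const_mul _) (hq.const_mul _), integral_const_mul, integral_const_mul] at h
  linarith

theorem integral_inv_one_add_sq_pow (n : ℕ) :
    ∫ x : ℝ, ((1 + x ^ 2) ^ (n + 1))⁻¹ = Real.pi * n.centralBinom / 4 ^ n := by
  induction n with
  | zero => simp [integral_univ_inv_one_add_sq]
  | succ n ih =>
    have hrec := mul_integral_inv_one_add_sq_pow_succ_succ n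
    have hbinom : (n + 1 : ℝ) * (n + 1).centralBinom = 2 * (2 * n + 1) * n.centralBinom := by
      exact_mod_cast n.succ_mul_centralBinom_succ
    rw [ih] at hrec
    refine mul_left_cancel₀ (show (2 * n + 2 : ℝ) ≠ 0 by positivity) ?_
    rw [hrec, pow_succ]
    field_simp
    linear_combination -2 * hbinom

theorem case_a_III_integrand_eq (x : ℝ) :
    ((-4 * I + 16 * x + 4 * I * x ^ 2) / ((x - I) ^ 5 * (x + I) ^ 4) : ℂ) =
      (12 * ((1 + x ^ 2) ^ 4)⁻¹ - 8 * ((1 + x ^ 2) ^ 5)⁻¹ : ℝ) +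
        I * (4 * (x * ((1 + x ^ 2) ^ 4)⁻¹) + 8 * (x * ((1 + x ^ 2) ^ 5)⁻¹) : ℝ) := by
  have hm : (x : ℂ) - I ≠ 0 := fun h => by simpa using congrArg im h
  have hp : (x : ℂ) + I ≠ 0 := fun h => by simpa using congrArg im h
  have hfac : 1 + (x : ℂ) ^ 2 = (x - I) * (x + I) := by
    ring_nf
    rw [I_sq]
    ring
  push_cast
  rw [hfac]
  field_simp
  linear_combination (8 + 4 * x ^ 2 + 4 * I * x) * I_sq

theorem integral_case_a_III :
    ∫ x : ℝ, ((-4 * I + 16 * x + 4 * I * x ^ 2) /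
      ((x - I) ^ 5 * (x + I) ^ 4) : ℂ) = ((25 : ℂ) / 16) * (Real.pi : ℂ) := by
  have hodd : Function.Odd fun x : ℝ =>
      4 * (x * ((1 + x ^ 2) ^ 4)⁻¹) + 8 * (x * ((1 + x ^ 2) ^ 5)⁻¹) := fun x => by
    simp only [neg_sq]
    ring
  have hq4 := integrable_inv_one_add_sq_pow 3
  have hq5 := integrable_inv_one_add_sq_pow 4
  have hxq4 := integrable_mul_inv_one_add_sq_pow 2
  have hxq5 := integrable_mul_inv_one_add_sq_pow 3
  simp_rw [case_a_III_integrand_eq]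
  rw [integral_add, integral_const_mul, integral_complex_ofReal, integral_complex_ofReal,
    hodd.integral_eq_zero, integral_sub, integral_const_mul, integral_const_mul,
    integral_inv_one_add_sq_pow 3, integral_inv_one_add_sq_pow 4]
  · simp only [show Nat.centralBinom 3 = 20 by rfl, show Nat.centralBinom 4 = 70 by rfl]
    push_cast
    ring
  exacts [hq4.const_mul _, hq5.const_mul _, ((hq4.const_mul _).sub (hq5.const_mul _)).ofReal,
    (((hxq4.const_mul _).add (hxq5.const_mul _)).ofReal).const_mul I]
end

section
/- The improper integral over the real line of the complex rational function x ↦ (7 + 6i − (20−15i)x + (7−6i)x² + 15ix³)/((x−i)⁵(x+i)⁴) equals −(35/16)π + (25/8)πi; equivalently, i times this integral equals (−25/8 − 35i/16)π. -/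
/-! Partial fractions: the residues of the integrand at `±I` cancel, so its simple-pole parts
combine into `(25/8 I - 35/16) / (1 + x ^ 2)`, and the rest is a sum of terms `c / (x - w) ^ k`
with `w = ±I` and `k ≥ 2`. Such a term is integrable and is the derivative of a multiple of
`(x - w) ^ (1 - k)`, which vanishes at `±∞`, so it integrates to zero. What remains is
`(25/8 I - 35/16) π`. -/

open Complex MeasureTheory Filter Topology Bornology

namespace Complex

variable {w : ℂ}

theorem ofReal_sub_ne_zero_of_im_ne_zero (hw : w.im ≠ 0) (x : ℝ) : (x : ℂ) - w ≠ 0 :=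
  fun h => hw (by simpa using congrArg im h)

theorem exists_one_add_sq_le_mul_norm_ofReal_sub_pow (hw : w.im ≠ 0) (n : ℕ) :
    ∃ K > 0, ∀ x : ℝ, 1 + x ^ 2 ≤ K * ‖((x : ℂ) - w) ^ (n + 2)‖ := by
  have him : 0 < |w.im| := abs_pos.mpr hw
  refine ⟨(2 + (1 + 2 * w.re ^ 2) / w.im ^ 2) / |w.im| ^ n, by positivity, fun x => ?_⟩
  -- `x ^ 2 ≤ 2 (x - w.re) ^ 2 + 2 w.re ^ 2` and `w.im ^ 2 ≤ ‖x - w‖ ^ 2`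
  have hsq : 1 + x ^ 2 ≤ (2 + (1 + 2 * w.re ^ 2) / w.im ^ 2) * ‖(x : ℂ) - w‖ ^ 2 := by
    rw [Complex.sq_norm, normSq_apply]
    simp only [sub_re, ofReal_re, sub_im, ofReal_im, zero_sub, neg_mul_neg]
    have him2 : 0 < w.im ^ 2 := by positivity
    have hratio : 1 ≤ ((x - w.re) * (x - w.re) + w.im * w.im) / w.im ^ 2 := by
      rw [le_div_iff₀ him2]
      nlinarith [mul_self_nonneg (x - w.re)]
    rw [add_mul, div_mul_eq_mul_div, mul_div_assoc]
    have hre : (0 : ℝ) ≤ 1 + 2 * w.re ^ 2 := by positivity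
    nlinarith [sq_nonneg (x - 2 * w.re), le_mul_of_one_le_right hre hratio]
  have hpow : |w.im| ^ n ≤ ‖(x : ℂ) - w‖ ^ n :=
    pow_le_pow_left₀ him.le (by simpa using abs_im_le_norm ((x : ℂ) - w)) n
  rw [norm_pow, pow_add, div_mul_eq_mul_div, le_div_iff₀ (by positivity)]
  calc (1 + x ^ 2) * |w.im| ^ n
      ≤ (2 + (1 + 2 * w.re ^ 2) / w.im ^ 2) * ‖(x : ℂ) - w‖ ^ 2 * ‖(x : ℂ) - w‖ ^ n :=
        mul_le_mul hsq hpow (by positivity) (by positivity)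
    _ = _ := by ring

theorem integrable_div_ofReal_sub_pow (hw : w.im ≠ 0) (c : ℂ) (n : ℕ) :
    Integrable fun x : ℝ => c / ((x : ℂ) - w) ^ (n + 2) := by
  obtain ⟨K, hK, hle⟩ := exists_one_add_sq_le_mul_norm_ofReal_sub_pow hw n
  refine (integrable_inv_one_add_sq.const_mul (‖c‖ * K)).mono' ?_ (ae_of_all _ fun x => ?_)
  · exact (continuous_const.div (by fun_prop)
      fun x => pow_ne_zero _ (ofReal_sub_ne_zero_of_im_ne_zero hw x)).aestronglyMeasurable
  · have hpos : 0 < ‖((x : ℂ) - w) ^ (n + 2)‖ :=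
      norm_pos_iff.mpr (pow_ne_zero _ (ofReal_sub_ne_zero_of_im_ne_zero hw x))
    rw [norm_div, div_eq_mul_inv, mul_assoc]
    gcongr
    rw [← div_eq_mul_inv, le_div_iff₀ (by positivity), inv_mul_le_iff₀ hpos, mul_comm]
    exact hle x

theorem tendsto_div_ofReal_sub_pow_cocompact (c w : ℂ) (n : ℕ) :
    Tendsto (fun x : ℝ => c / ((x : ℂ) - w) ^ (n + 1)) (cocompact ℝ) (𝓝 0) := by
  have h : Tendsto (fun x : ℝ => ((x : ℂ) - w) ^ (n + 1)) (cocompact ℝ) (cobounded ℂ) :=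
    (tendsto_pow_cobounded_cobounded n.succ_ne_zero).comp <| (tendsto_sub_const_cobounded w).comp <|
      Metric.cobounded_eq_cocompact (α := ℝ) ▸ RCLike.tendsto_ofReal_cobounded_cobounded ℂ
  simpa [div_eq_mul_inv] using (tendsto_inv₀_cobounded.comp h).const_mul c

theorem hasDerivAt_div_ofReal_sub_pow (c w : ℂ) (n : ℕ) {x : ℝ} (hx : (x : ℂ) - w ≠ 0) :
    HasDerivAt (fun y : ℝ => -(c / (n + 1)) / ((y : ℂ) - w) ^ (n + 1))
      (c / ((x : ℂ) - w) ^ (n + 2)) x := by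
  have hpow : HasDerivAt (fun z : ℂ => (z - w) ^ (n + 1)) ((n + 1) * ((x : ℂ) - w) ^ n) x := by
    simpa using ((hasDerivAt_id (x : ℂ)).sub_const w).fun_pow (n + 1)
  refine (((hasDerivAt_const (x : ℂ) (-(c / (n + 1)))).div hpow
    (pow_ne_zero _ hx)).comp_ofReal).congr_deriv ?_
  field_simp
  ring

theorem integral_div_ofReal_sub_pow_eq_zero (hw : w.im ≠ 0) (c : ℂ) (n : ℕ) :
    ∫ x : ℝ, c / ((x : ℂ) - w) ^ (n + 2) = 0 := by
  have h := tendsto_div_ofReal_sub_pow_cocompact (-(c / (n + 1))) w n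
  simpa using integral_of_hasDerivAt_of_tendsto
    (fun x => hasDerivAt_div_ofReal_sub_pow c w n (ofReal_sub_ne_zero_of_im_ne_zero hw x))
    (integrable_div_ofReal_sub_pow hw c n) (h.mono_left atBot_le_cocompact)
    (h.mono_left atTop_le_cocompact)

theorem integrable_sum_div_ofReal_sub_pow (hw : w.im ≠ 0) {ι : Type*} (s : Finset ι)
    (c : ι → ℂ) (n : ι → ℕ) :
    Integrable fun x : ℝ => ∑ k ∈ s, c k / ((x : ℂ) - w) ^ (n k + 2) :=
  integrable_finsetSum s fun k _ => integrable_div_ofReal_sub_pow hw (c k) (n k)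

theorem integral_sum_div_ofReal_sub_pow_eq_zero (hw : w.im ≠ 0) {ι : Type*} (s : Finset ι)
    (c : ι → ℂ) (n : ι → ℕ) :
    ∫ x : ℝ, ∑ k ∈ s, c k / ((x : ℂ) - w) ^ (n k + 2) = 0 := by
  rw [integral_finsetSum s fun k _ => integrable_div_ofReal_sub_pow hw (c k) (n k)]
  exact Finset.sum_eq_zero fun k _ => integral_div_ofReal_sub_pow_eq_zero hw (c k) (n k)

end Complex

theorem integrand_case_b_eq_partial_fractions (x : ℝ) :
    ((7 + 6 * I - (20 - 15 * I) * x + (7 - 6 * I) * x ^ 2 + 15 * I * x ^ 3) /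
        ((x - I) ^ 5 * (x + I) ^ 4) : ℂ) =
      (25 / 8 * I - 35 / 16) * (((1 + x ^ 2)⁻¹ : ℝ) : ℂ) +
        (∑ k : Fin 4, ![3 / 4 - 21 / 16 * I, -3 / 8 - I / 8, 1 / 2 - I, -I / 2] k /
            ((x : ℂ) - I) ^ ((k : ℕ) + 2) +
          ∑ k : Fin 3, ![23 / 16 - 29 / 16 * I, 11 / 8 + 3 / 2 * I, -1] k /
            ((x : ℂ) - -I) ^ ((k : ℕ) + 2)) := by
  have hm := ofReal_sub_ne_zero_of_im_ne_zero (w := I) (by simp) x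
  have hp := ofReal_sub_ne_zero_of_im_ne_zero (w := -I) (by simp) x
  rw [sub_neg_eq_add] at hp
  simp only [Fin.sum_univ_four, Fin.sum_univ_three, Fin.isValue, Fin.coe_ofNat_eq_mod,
    Nat.reduceMod, Nat.reduceAdd, Matrix.cons_val, sub_neg_eq_add, ofReal_inv, ofReal_add,
    ofReal_one, ofReal_pow]
  rw [show (1 : ℂ) + x ^ 2 = (x - I) * (x + I) by linear_combination I_sq]
  field_simp
  ring_nf
  simp only [I_pow_eq_pow_mod 5, I_pow_eq_pow_mod 6, I_pow_eq_pow_mod 7, I_pow_eq_pow_mod 8,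
    Nat.reduceMod, pow_one, I_sq, I_pow_three, I_pow_four]
  ring

theorem integral_case_b_eq_mul_pi :
    (∫ x : ℝ, ((7 + 6 * I - (20 - 15 * I) * x + (7 - 6 * I) * x ^ 2 + 15 * I * x ^ 3) /
        ((x - I) ^ 5 * (x + I) ^ 4) : ℂ)) = (25 / 8 * I - 35 / 16) * Real.pi := by
  have hI : I.im ≠ 0 := by simp
  have hnegI : (-I).im ≠ 0 := by simp
  have hsimple :
      Integrable fun x : ℝ => (25 / 8 * I - 35 / 16) * (((1 + x ^ 2)⁻¹ : ℝ) : ℂ) :=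
    integrable_inv_one_add_sq.ofReal.const_mul _
  have hpoleI := integrable_sum_div_ofReal_sub_pow hI Finset.univ
    ![3 / 4 - 21 / 16 * I, -3 / 8 - I / 8, 1 / 2 - I, -I / 2] Fin.val
  have hpoleNegI := integrable_sum_div_ofReal_sub_pow hnegI Finset.univ
    ![23 / 16 - 29 / 16 * I, 11 / 8 + 3 / 2 * I, -1] Fin.val
  simp_rw [integrand_case_b_eq_partial_fractions]
  rw [integral_add hsimple (hpoleI.fun_add hpoleNegI), integral_add hpoleI hpoleNegI,
    integral_sum_div_ofReal_sub_pow_eq_zero hI, integral_sum_div_ofReal_sub_pow_eq_zero hnegI,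
    integral_const_mul, integral_complex_ofReal, integral_univ_inv_one_add_sq, add_zero, add_zero]

theorem integral_case_b :
    (∫ x : ℝ, ((7 + 6 * I - (20 - 15 * I) * x + (7 - 6 * I) * x ^ 2 + 15 * I * x ^ 3) /
        ((x - I) ^ 5 * (x + I) ^ 4) : ℂ)
      = -((35 : ℂ) / 16) * (Real.pi : ℂ) + ((25 : ℂ) / 8) * (Real.pi : ℂ) * I) ∧
    I * (∫ x : ℝ, ((7 + 6 * I - (20 - 15 * I) * x + (7 - 6 * I) * x ^ 2 + 15 * I * x ^ 3) /
        ((x - I) ^ 5 * (x + I) ^ 4) : ℂ))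
      = (-(25 : ℂ) / 8 - 35 * I / 16) * (Real.pi : ℂ) := by
  rw [integral_case_b_eq_mul_pi]
  constructor
  · ring
  · linear_combination (25 / 8 * Real.pi : ℂ) * I_sq
end

section
/- The improper integral over the real line of the complex rational function x ↦ (−7i + 26x + 15ix²)/((x−i)⁵(x+i)³) equals (55/16)πi; equivalently, −i times this integral equals 55π/16. -/
/-!
Partial fractions split the integrand into `(55 i / 16) / (1 + x²)` plus multiples of
`(x ∓ i)^{-k}` with `k ≥ 2`. Each `(x - a)^{-k}` with `Im a ≠ 0` and `k ≥ 2` is integrable and is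
the derivative of `-(x - a)^{1-k} / (k - 1)`, which vanishes at `±∞`, so it integrates to `0`;
what remains is `(55 i / 16) ∫ 1 / (1 + x²) = 55 π i / 16`.
-/

open Complex MeasureTheory Filter Topology

lemma ofReal_sub_ne_zero {a : ℂ} (ha : a.im ≠ 0) (x : ℝ) : (x : ℂ) - a ≠ 0 := by
  rw [sub_ne_zero]; rintro rfl; simp at ha

lemma tendsto_inv_ofReal_sub_pow_cobounded (a : ℂ) (n : ℕ) :
    Tendsto (fun x : ℝ ↦ (((x : ℂ) - a) ^ (n + 1))⁻¹) (Bornology.cobounded ℝ) (𝓝 0) := by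
  have h := (tendsto_inv₀_cobounded.comp ((tendsto_sub_const_cobounded a).comp
    (RCLike.tendsto_ofReal_cobounded_cobounded ℂ))).pow (n + 1)
  simpa [Function.comp_def, inv_pow] using h

lemma hasDerivAt_inv_ofReal_sub_pow {a : ℂ} (ha : a.im ≠ 0) (n : ℕ) (x : ℝ) :
    HasDerivAt (fun x : ℝ ↦ (((x : ℂ) - a) ^ (n + 1))⁻¹)
      (-(n + 1) * (((x : ℂ) - a) ^ (n + 2))⁻¹) x := by
  have hx := ofReal_sub_ne_zero ha x
  refine ((((hasDerivAt_id (x : ℂ)).sub_const a).pow (n + 1)).inv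
    (pow_ne_zero _ hx)).comp_ofReal.congr_deriv ?_
  simp only [id, Pi.pow_apply]
  field_simp
  push_cast
  ring

lemma norm_inv_ofReal_sub_pow_le {a : ℂ} (ha : a.im ≠ 0) (n : ℕ) (x : ℝ) :
    ‖(((x : ℂ) - a) ^ (n + 2))⁻¹‖ ≤ |a.im|⁻¹ ^ n * ((x - a.re) ^ 2 + a.im ^ 2)⁻¹ := by
  have him : |a.im| ≤ ‖(x : ℂ) - a‖ := by simpa using abs_im_le_norm ((x : ℂ) - a)
  have hsq : ‖(x : ℂ) - a‖ ^ 2 = (x - a.re) ^ 2 + a.im ^ 2 := by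
    rw [Complex.sq_norm, normSq_apply]
    simp only [sub_re, ofReal_re, sub_im, ofReal_im]
    ring
  rw [norm_inv, norm_pow, pow_add, mul_inv, hsq, inv_pow]
  gcongr

lemma integrable_inv_ofReal_sub_pow {a : ℂ} (ha : a.im ≠ 0) (n : ℕ) :
    Integrable (fun x : ℝ ↦ (((x : ℂ) - a) ^ (n + 2))⁻¹) := by
  have hdom : Integrable (fun x : ℝ ↦ ((x - a.re) ^ 2 + a.im ^ 2)⁻¹) := by
    have := ((integrable_inv_one_add_sq.comp_div ha).comp_sub_right a.re).const_mul (a.im ^ 2)⁻¹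
    refine this.congr (ae_of_all _ fun x ↦ ?_)
    simp only
    field_simp
    ring
  refine (hdom.const_mul (|a.im|⁻¹ ^ n)).mono' ?_ (ae_of_all _ (norm_inv_ofReal_sub_pow_le ha n))
  exact (Continuous.inv₀ (by fun_prop) fun x ↦
    pow_ne_zero _ (ofReal_sub_ne_zero ha x)).aestronglyMeasurable

lemma integral_inv_ofReal_sub_pow {a : ℂ} (ha : a.im ≠ 0) (n : ℕ) :
    ∫ x : ℝ, (((x : ℂ) - a) ^ (n + 2))⁻¹ = 0 := by
  have hlim := tendsto_inv_ofReal_sub_pow_cobounded a n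
  rw [IsOrderBornology.cobounded_eq] at hlim
  have h := integral_of_hasDerivAt_of_tendsto (hasDerivAt_inv_ofReal_sub_pow ha n)
    ((integrable_inv_ofReal_sub_pow ha n).const_mul _) (hlim.mono_left le_sup_left)
    (hlim.mono_left le_sup_right)
  rw [integral_const_mul, sub_self] at h
  exact (mul_eq_zero.1 h).resolve_left (by norm_cast)

lemma integrable_sum_mul_inv_ofReal_sub_pow {a : ℂ} (ha : a.im ≠ 0) {N : ℕ} (c : Fin N → ℂ) :
    Integrable (fun x : ℝ ↦ ∑ k, c k * (((x : ℂ) - a) ^ (k + 2 : ℕ))⁻¹) :=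
  integrable_finsetSum _ fun k _ ↦ (integrable_inv_ofReal_sub_pow ha k).const_mul (c k)

lemma integral_sum_mul_inv_ofReal_sub_pow {a : ℂ} (ha : a.im ≠ 0) {N : ℕ} (c : Fin N → ℂ) :
    ∫ x : ℝ, ∑ k, c k * (((x : ℂ) - a) ^ (k + 2 : ℕ))⁻¹ = 0 := by
  rw [integral_finsetSum _ fun (k : Fin N) _ ↦
    (integrable_inv_ofReal_sub_pow ha k).const_mul (c k)]
  simp [integral_const_mul, integral_inv_ofReal_sub_pow ha]

lemma integrable_inv_one_add_ofReal_sq : Integrable (fun x : ℝ ↦ (1 + (x : ℂ) ^ 2)⁻¹) := by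
  have h : Integrable (fun x : ℝ ↦ (((1 + x ^ 2)⁻¹ : ℝ) : ℂ)) := integrable_inv_one_add_sq.ofReal
  simpa using h

lemma integral_inv_one_add_ofReal_sq : ∫ x : ℝ, (1 + (x : ℂ) ^ 2)⁻¹ = (Real.pi : ℂ) := by
  rw [← integral_univ_inv_one_add_sq, ← integral_complex_ofReal]
  simp

lemma integrand_partial_fractions (x : ℝ) :
    (-7 * I + 26 * x + 15 * I * x ^ 2) / ((x - I) ^ 5 * (x + I) ^ 3) =
      55 * I / 16 * (1 + (x : ℂ) ^ 2)⁻¹ +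
        ((∑ k, ![-(23 * I / 16), -3 / 8, -(5 * I / 4), -1 / 2] k *
            (((x : ℂ) - I) ^ (k + 2 : ℕ))⁻¹) +
          ∑ k, ![-(2 * I), 3 / 2] k * (((x : ℂ) - -I) ^ (k + 2 : ℕ))⁻¹) := by
  have h₁ := ofReal_sub_ne_zero (a := I) (by simp) x
  have h₂ : (x : ℂ) + I ≠ 0 := by simpa using ofReal_sub_ne_zero (a := -I) (by simp) x
  have h₃ : 1 + (x : ℂ) ^ 2 = (x - I) * (x + I) := by linear_combination I_sq
  simp only [Fin.sum_univ_succ, Fin.sum_univ_zero, Matrix.cons_val_zero, Matrix.cons_val_succ,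
    Fin.val_zero, Fin.val_succ, Nat.reduceAdd, zero_add, add_zero, sub_neg_eq_add, h₃]
  field_simp
  ring_nf
  rw [I_pow_eq_pow_mod 5, I_pow_eq_pow_mod 6, I_pow_eq_pow_mod 7]
  norm_num [I_sq, I_pow_three]
  ring_nf

theorem integral_case_c :
    (∫ x : ℝ, ((-7 * I + 26 * x + 15 * I * x ^ 2) /
        ((x - I) ^ 5 * (x + I) ^ 3) : ℂ) = ((55 : ℂ) / 16) * (Real.pi : ℂ) * I) ∧
    -I * (∫ x : ℝ, ((-7 * I + 26 * x + 15 * I * x ^ 2) /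
        ((x - I) ^ 5 * (x + I) ^ 3) : ℂ)) = ((55 : ℂ) / 16) * (Real.pi : ℂ) := by
  have hI : I.im ≠ 0 := by simp
  have hnegI : (-I).im ≠ 0 := by simp
  have hint : ∫ x : ℝ, ((-7 * I + 26 * x + 15 * I * x ^ 2) / ((x - I) ^ 5 * (x + I) ^ 3) : ℂ) =
      55 / 16 * Real.pi * I := by
    simp_rw [integrand_partial_fractions]
    have hS₁ :=
      integrable_sum_mul_inv_ofReal_sub_pow hI ![-(23 * I / 16), -3 / 8, -(5 * I / 4), -1 / 2]
    have hS₂ := integrable_sum_mul_inv_ofReal_sub_pow hnegI ![-(2 * I), 3 / 2]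
    rw [integral_add (integrable_inv_one_add_ofReal_sq.const_mul _) (by exact hS₁.add hS₂),
      integral_add hS₁ hS₂, integral_const_mul, integral_inv_one_add_ofReal_sq,
      integral_sum_mul_inv_ofReal_sub_pow hI, integral_sum_mul_inv_ofReal_sub_pow hnegI]
    ring
  refine ⟨hint, ?_⟩
  rw [hint]
  linear_combination -(55 / 16 * Real.pi : ℂ) * I_sq
end

section
/- Let V be a finite-dimensional complex vector space, let a, b, p be linear endomorphisms of V, let h be a real number, and assume tr(a∘p) = −4h, tr(b∘p) = 0, tr(a∘a) = −8, tr(b∘b) = −8, and tr(a∘b) = 0. Then for every real number ξ, the trace of the composition [ (1/(2(ξ−i)²))·(a + i·b) ] ∘ [ (2ih/(1+ξ²)⁴)·( (1−5ξ²)·b − 6ξ·a ) + (4iξ/(1+ξ²)³)·p ] equals h·(8i − 32ξ − 8iξ²)/((ξ−i)⁵(ξ+i)⁴). -/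
open Complex

section TraceIdentities

variable {V : Type*} [AddCommGroup V] [Module ℂ V]

theorem LinearMap.trace_add_I_smul_comp (a b q : V →ₗ[ℂ] V) :
    LinearMap.trace ℂ V ((a + I • b) ∘ₗ q)
      = LinearMap.trace ℂ V (a ∘ₗ q) + I * LinearMap.trace ℂ V (b ∘ₗ q) := by
  rw [LinearMap.add_comp, LinearMap.smul_comp, map_add, map_smul, smul_eq_mul]

theorem LinearMap.trace_add_I_smul_comp_sub [FiniteDimensional ℂ V] {a b : V →ₗ[ℂ] V} {s : ℂ}
    (haa : LinearMap.trace ℂ V (a ∘ₗ a) = s) (hbb : LinearMap.trace ℂ V (b ∘ₗ b) = s)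
    (hab : LinearMap.trace ℂ V (a ∘ₗ b) = 0) (u v : ℂ) :
    LinearMap.trace ℂ V ((a + I • b) ∘ₗ (u • b - v • a)) = s * (I * u - v) := by
  have hba : LinearMap.trace ℂ V (b ∘ₗ a) = 0 := by rwa [LinearMap.trace_comp_comm']
  simp only [LinearMap.trace_add_I_smul_comp, LinearMap.comp_sub, LinearMap.comp_smul, map_sub,
    map_smul, smul_eq_mul, haa, hbb, hab, hba]
  ring

end TraceIdentities

theorem Complex.sub_I_ne_zero (ξ : ℝ) : (ξ : ℂ) - I ≠ 0 := fun h => by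
  simpa using congrArg Complex.im h

theorem Complex.add_I_ne_zero (ξ : ℝ) : (ξ : ℂ) + I ≠ 0 := fun h => by
  simpa using congrArg Complex.im h

theorem case_a_III_rational_identity {z : ℂ} (hm : z - I ≠ 0) (hp : z + I ≠ 0) (h : ℂ) :
    1 / (2 * (z - I) ^ 2) *
        (2 * I * h / (1 + z ^ 2) ^ 4 * (-8 * (I * (1 - 5 * z ^ 2) - 6 * z))
          + 4 * I * z / (1 + z ^ 2) ^ 3 * (-4 * h))
      = h * (8 * I - 32 * z - 8 * I * z ^ 2) / ((z - I) ^ 5 * (z + I) ^ 4) := by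
  have hfactor : 1 + z ^ 2 = (z - I) * (z + I) := by
    linear_combination I_sq
  rw [hfactor]
  field_simp
  linear_combination (64 * h * z ^ 2 + 16 * h * I * z) * I_sq

theorem trace_case_a_III (V : Type*) [AddCommGroup V] [Module ℂ V] [FiniteDimensional ℂ V]
    (a b p : V →ₗ[ℂ] V) (h : ℝ)
    (hap : LinearMap.trace ℂ V (a ∘ₗ p) = -4 * (h : ℂ))
    (hbp : LinearMap.trace ℂ V (b ∘ₗ p) = 0)
    (haa : LinearMap.trace ℂ V (a ∘ₗ a) = -8)
    (hbb : LinearMap.trace ℂ V (b ∘ₗ b) = -8)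
    (hab : LinearMap.trace ℂ V (a ∘ₗ b) = 0) :
    ∀ ξ : ℝ, LinearMap.trace ℂ V
      (((1 / (2 * ((ξ : ℂ) - I) ^ 2)) • (a + I • b))
        ∘ₗ ((2 * I * (h : ℂ) / (1 + (ξ : ℂ) ^ 2) ^ 4) •
              ((1 - 5 * (ξ : ℂ) ^ 2) • b - (6 * (ξ : ℂ)) • a)
            + (4 * I * (ξ : ℂ) / (1 + (ξ : ℂ) ^ 2) ^ 3) • p))
      = (h : ℂ) * (8 * I - 32 * (ξ : ℂ) - 8 * I * (ξ : ℂ) ^ 2) /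
          (((ξ : ℂ) - I) ^ 5 * ((ξ : ℂ) + I) ^ 4) := by
  intro ξ
  rw [LinearMap.smul_comp, map_smul, LinearMap.comp_add, LinearMap.comp_smul, LinearMap.comp_smul,
    map_add, map_smul, map_smul, LinearMap.trace_add_I_smul_comp_sub haa hbb hab,
    LinearMap.trace_add_I_smul_comp, hap, hbp, mul_zero, add_zero]
  exact case_a_III_rational_identity (sub_I_ne_zero ξ) (add_I_ne_zero ξ) h
end

section
/- Let V be an 8-dimensional complex vector space, let a, b, p be linear endomorphisms of V, let h be a real number, and assume a∘a = −id, b∘b = −id, a∘b = −b∘a, tr(a∘p) = −4h, and tr(b∘p) = 0. Then for every real number ξ, the trace of the composition [ −(1/(2(ξ−i)²))·(a + i·b) ] ∘ (1/(1+ξ²)⁴)·[ ((11/2)ξ(1+ξ²) + 8iξ)·h·a + ( −2i + 6iξ² − (7/4)(1+ξ²) + (15/4)ξ²(1+ξ²) )·h·b − 3iξ(1+ξ²)·p + i(1+ξ²)·(a∘b∘p) ] equals h·( 7 + 6i − (20−15i)ξ + (7−6i)ξ² + 15iξ³ )/((ξ−i)⁵(ξ+i)⁴). -/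
/-! Expanding the composite by linearity, the Clifford relations turn every term into a multiple
of `tr id = 8`, `tr (a p)`, `tr (b p)` or a mixed trace `tr (a b)`, which vanishes because
`tr (a b) = tr (b a) = -tr (a b)`. What is left is a rational identity in `ξ`, valid once
`i² = -1` is used. -/

namespace LinearMap

section Clifford

variable {R M : Type*} [Semiring R] [AddCommGroup M] [Module R M] {a b : M →ₗ[R] M}

lemma comp_comp_of_comp_self_eq_neg_id (haa : a ∘ₗ a = -id) (f : M →ₗ[R] M) :
    a ∘ₗ a ∘ₗ f = -f := by
  rw [← comp_assoc, haa, neg_comp, id_comp]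

lemma comp_comp_comp_of_anticomm (hbb : b ∘ₗ b = -id) (hab : a ∘ₗ b = -(b ∘ₗ a))
    (f : M →ₗ[R] M) : b ∘ₗ a ∘ₗ b ∘ₗ f = a ∘ₗ f := by
  rw [← comp_assoc, neg_eq_iff_eq_neg.mp hab.symm, neg_comp, comp_assoc,
    comp_comp_of_comp_self_eq_neg_id hbb, comp_neg, neg_neg]

end Clifford

section Trace

variable {R M : Type*} [CommRing R] [AddCommGroup M] [Module R M] {a b : M →ₗ[R] M}

lemma trace_comp_eq_zero_of_anticomm [NoZeroDivisors R] [CharZero R]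
    (hab : a ∘ₗ b = -(b ∘ₗ a)) : trace R M (a ∘ₗ b) = 0 := by
  have hba : b ∘ₗ a = -(a ∘ₗ b) := neg_eq_iff_eq_neg.mp hab.symm
  rw [← CharZero.eq_neg_self_iff, ← map_neg, ← hba]
  exact trace_mul_comm R a b

variable [Module.Free R M] [Module.Finite R M]

lemma trace_comp_self_of_comp_self_eq_neg_id (haa : a ∘ₗ a = -id) :
    trace R M (a ∘ₗ a) = -(Module.finrank R M : R) := by
  rw [haa, map_neg, trace_id]

lemma trace_add_smul_comp_of_anticomm [NoZeroDivisors R] [CharZero R] (haa : a ∘ₗ a = -id)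
    (hbb : b ∘ₗ b = -id) (hab : a ∘ₗ b = -(b ∘ₗ a)) (p : M →ₗ[R] M) (u c₁ c₂ c₃ c₄ : R) :
    trace R M ((a + u • b) ∘ₗ (c₁ • a + c₂ • b - c₃ • p + c₄ • (a ∘ₗ b ∘ₗ p))) =
      -(Module.finrank R M : R) * (c₁ + u * c₂) - (c₃ - u * c₄) * trace R M (a ∘ₗ p)
        - (u * c₃ + c₄) * trace R M (b ∘ₗ p) := by
  have hba : b ∘ₗ a = -(a ∘ₗ b) := neg_eq_iff_eq_neg.mp hab.symm
  simp only [add_comp, smul_comp, comp_add, comp_sub, comp_smul, map_add, map_sub, map_smul,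
    comp_comp_of_comp_self_eq_neg_id haa, comp_comp_comp_of_anticomm hbb hab, map_neg,
    trace_comp_self_of_comp_self_eq_neg_id haa, trace_comp_self_of_comp_self_eq_neg_id hbb,
    trace_comp_eq_zero_of_anticomm hab, trace_comp_eq_zero_of_anticomm hba, smul_eq_mul]
  ring

end Trace

end LinearMap

open Complex

theorem trace_case_b (V : Type*) [AddCommGroup V] [Module ℂ V] [FiniteDimensional ℂ V]
    (hdim : Module.finrank ℂ V = 8)
    (a b p : V →ₗ[ℂ] V) (h : ℝ)
    (haa : a ∘ₗ a = -LinearMap.id)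
    (hbb : b ∘ₗ b = -LinearMap.id)
    (hab : a ∘ₗ b = -(b ∘ₗ a))
    (hap : LinearMap.trace ℂ V (a ∘ₗ p) = -4 * (h : ℂ))
    (hbp : LinearMap.trace ℂ V (b ∘ₗ p) = 0) :
    ∀ ξ : ℝ, LinearMap.trace ℂ V
      ((-(1 / (2 * ((ξ : ℂ) - I) ^ 2)) • (a + I • b))
        ∘ₗ ((1 / (1 + (ξ : ℂ) ^ 2) ^ 4) •
            ((((11 : ℂ) / 2 * (ξ : ℂ) * (1 + (ξ : ℂ) ^ 2) + 8 * I * (ξ : ℂ)) * (h : ℂ)) • a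
              + ((-2 * I + 6 * I * (ξ : ℂ) ^ 2 - (7 : ℂ) / 4 * (1 + (ξ : ℂ) ^ 2)
                  + (15 : ℂ) / 4 * (ξ : ℂ) ^ 2 * (1 + (ξ : ℂ) ^ 2)) * (h : ℂ)) • b
              - (3 * I * (ξ : ℂ) * (1 + (ξ : ℂ) ^ 2)) • p
              + (I * (1 + (ξ : ℂ) ^ 2)) • (a ∘ₗ b ∘ₗ p))))
      = (h : ℂ) * (7 + 6 * I - (20 - 15 * I) * (ξ : ℂ) + (7 - 6 * I) * (ξ : ℂ) ^ 2
            + 15 * I * (ξ : ℂ) ^ 3) /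
          (((ξ : ℂ) - I) ^ 5 * ((ξ : ℂ) + I) ^ 4) := by
  intro ξ
  rw [LinearMap.smul_comp, LinearMap.comp_smul, map_smul, map_smul,
    LinearMap.trace_add_smul_comp_of_anticomm haa hbb hab, hdim, hap, hbp, smul_eq_mul, smul_eq_mul]
  set x : ℂ := (ξ : ℂ)
  have hsub : x - I ≠ 0 := by simp [x, Complex.ext_iff]
  have hadd : x + I ≠ 0 := by simp [x, Complex.ext_iff]
  have hfac : 1 + x ^ 2 = (x - I) * (x + I) := by linear_combination I_sq
  calc _ = -(1 / (2 * (x - I) ^ 2)) * (1 / (1 + x ^ 2) ^ 4 * (-2 * h *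
        (7 + 6 * I - (20 - 15 * I) * x + (7 - 6 * I) * x ^ 2 + 15 * I * x ^ 3) * (x - I))) := by
        congr 2
        push_cast
        linear_combination -10 * h * x * (3 + 4 * x + 3 * x ^ 2) * I_sq
    _ = _ := by
        rw [hfac]
        field_simp
end
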